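/- arXiv:2501.09545 — 3 statements merged into one kernel-verified Lean document; each statement's English description precedes it below -/
import Mathlib

section
/- Comparison lemma for liftings: Let F be a k-uniform family of subsets of [n], let ℓ ≥ 1, and let φ : binom([n],k) → binom([n]×[n], kℓ) be a proper lifting, meaning for every S and every i ∈ S, |φ(S) ∩ ({i}×[n])| = ℓ. Let {A_{i,j}}_{i∈[n],j∈[ℓ]} and {Ã_{i,j}}_{i,j∈[n]} be i.i.d. real random variables. Then E[sup_{S∈F} Σ_{(i,j)∈S×[ℓ]} A_{i,j}] ≤ E[sup_{S∈F} Σ_{(i,j)∈φ(S)} Ã_{i,j}]. -/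
/-!
Put both families of variables on the coordinates of one i.i.d. vector `x` indexed by
`[n] × ([ℓ] ⊔ [n])`: then `S × [ℓ]` becomes `S × C` for the column set `C = [ℓ]`, and `φ(S)` a
lift of `S` with `|C|` elements in each row of `S`. For two cells `p`, `q` of one row, compress
every lift along `p → q` (trade `p` for `q` where possible). As `x` and `x ∘ swap p q` have the
same law, it suffices that compression does not increase
`max_S Σ_{φ S} x + max_S Σ_{φ S} x ∘ swap p q` pointwise, and indeed, if `x p ≤ x q`, it just
sorts each pair `(Σ_{φ S} x, Σ_{φ S} x ∘ swap p q)` into (max, min). Each lift has `|C|`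
elements in every row, so an element outside the columns `C` leaves a free cell of `C` in its
row; compressing it into that cell strictly reduces the number of elements outside `C`, and
when none is left every lift is `S × C`.
-/

open MeasureTheory ProbabilityTheory Finset

theorem Finset.sup'_max_add_sup'_min_le {α β : Type*} [LinearOrder β] [AddCommMonoid β]
    [IsOrderedAddMonoid β] {s : Finset α} (hs : s.Nonempty) (f g : α → β) :
    s.sup' hs (fun i => max (f i) (g i)) + s.sup' hs (fun i => min (f i) (g i))
      ≤ s.sup' hs f + s.sup' hs g :=
  calc _ ≤ max (s.sup' hs f) (s.sup' hs g) + min (s.sup' hs f) (s.sup' hs g) :=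
        add_le_add (sup'_le _ _ fun _ hi => max_le_max (le_sup' f hi) (le_sup' g hi))
          (sup'_le _ _ fun _ hi => min_le_min (le_sup' f hi) (le_sup' g hi))
    _ = s.sup' hs f + s.sup' hs g := max_add_min _ _

section SwapCompress

variable {ι : Type*} [DecidableEq ι]

/-- Mathlib's `UV.compress {q} {p} T`, written with `swap p q` so that sums over it are sums over
`T` reindexed. -/
def swapCompress (p q : ι) (T : Finset ι) : Finset ι :=
  if p ∈ T ∧ q ∉ T then T.map (Equiv.swap p q).toEmbedding else T

variable {p q : ι} {T : Finset ι}

theorem apply_swap_of_apply_eq {β : Type*} {f : ι → β} (h : f p = f q) (e : ι) :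
    f (Equiv.swap p q e) = f e := by
  rcases eq_or_ne e p with rfl | hp
  · simp [h]
  rcases eq_or_ne e q with rfl | hq
  · simp [h]
  rw [Equiv.swap_apply_of_ne_of_ne hp hq]

theorem card_filter_swapCompress {β : Type*} [DecidableEq β] {f : ι → β} (h : f p = f q) (b : β) :
    #((swapCompress p q T).filter fun e => f e = b) = #(T.filter fun e => f e = b) := by
  unfold swapCompress
  split_ifs
  · simp only [filter_map, card_map, Function.comp_def, Equiv.coe_toEmbedding,
      apply_swap_of_apply_eq h]
  · rfl

theorem not_mem_and_notMem_swapCompress : ¬(p ∈ swapCompress p q T ∧ q ∉ swapCompress p q T) := by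
  unfold swapCompress
  split_ifs with hT
  · simp [mem_map_equiv, hT.2]
  · exact hT

theorem sum_comp_swap_add {M : Type*} [AddCommMonoid M] (hp : p ∈ T) (hq : q ∉ T) (x : ι → M) :
    ∑ e ∈ T, x (Equiv.swap p q e) + x p = ∑ e ∈ T, x e + x q := by
  have hfix : ∀ e ∈ T.erase p, x (Equiv.swap p q e) = x e := fun e he => by
    rw [Equiv.swap_apply_of_ne_of_ne (ne_of_mem_erase he)
      (ne_of_mem_of_not_mem (mem_of_mem_erase he) hq)]
  rw [← add_sum_erase T _ hp, ← add_sum_erase T x hp, sum_congr rfl hfix, Equiv.swap_apply_left]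
  abel

theorem sum_swapCompress_of_mem {M : Type*} [AddCommMonoid M] (h : p ∈ T ∧ q ∉ T) (x : ι → M) :
    ∑ e ∈ swapCompress p q T, x e = ∑ e ∈ T, x (Equiv.swap p q e) := by
  rw [swapCompress, if_pos h, sum_map, Equiv.coe_toEmbedding]

theorem card_filter_swapCompress_lt {P : ι → Prop} [DecidablePred P] (hp : P p) (hq : ¬P q)
    (hT : p ∈ T ∧ q ∉ T) : #((swapCompress p q T).filter P) < #(T.filter P) := by
  have h := sum_comp_swap_add hT.1 hT.2 fun e => if P e then 1 else 0
  rw [← sum_swapCompress_of_mem hT fun e => if P e then 1 else 0] at h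
  simp only [card_filter, if_pos hp, if_neg hq] at h ⊢
  omega

theorem sum_comp_swap_le (x : ι → ℝ) (hx : x p ≤ x q) (hT : ¬(p ∈ T ∧ q ∉ T)) :
    ∑ e ∈ T, x (Equiv.swap p q e) ≤ ∑ e ∈ T, x e := by
  by_cases hq : q ∈ T
  · by_cases hp : p ∈ T
    · refine (Equiv.Perm.sum_comp _ T x fun e he => ?_).le
      rcases (Equiv.swap_apply_ne_self_iff.mp he).2 with rfl | rfl <;> assumption
    · have h := sum_comp_swap_add hq hp x
      rw [Equiv.swap_comm] at h
      linarith
  · have hp : p ∉ T := fun hp => hT ⟨hp, hq⟩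
    refine (sum_congr rfl fun e he => ?_).le
    rw [Equiv.swap_apply_of_ne_of_ne (ne_of_mem_of_not_mem he hp) (ne_of_mem_of_not_mem he hq)]

theorem sum_swapCompress_eq_max_min (x : ι → ℝ) (hx : x p ≤ x q) :
    ∑ e ∈ swapCompress p q T, x e = max (∑ e ∈ T, x e) (∑ e ∈ T, x (Equiv.swap p q e)) ∧
      ∑ e ∈ swapCompress p q T, x (Equiv.swap p q e)
        = min (∑ e ∈ T, x e) (∑ e ∈ T, x (Equiv.swap p q e)) := by
  have hle := sum_comp_swap_le x hx (not_mem_and_notMem_swapCompress (T := T))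
  by_cases hT : p ∈ T ∧ q ∉ T
  · simp only [sum_swapCompress_of_mem hT, Equiv.swap_apply_self] at hle ⊢
    exact ⟨(max_eq_right hle).symm, (min_eq_left hle).symm⟩
  · simp only [swapCompress, if_neg hT] at hle ⊢
    exact ⟨(max_eq_left hle).symm, (min_eq_right hle).symm⟩

end SwapCompress

section ProperLift

variable {α κ : Type*} [DecidableEq α] {m : ℕ} {S : Finset α} {T : Finset (α × κ)}

def IsProperLift (m : ℕ) (S : Finset α) (T : Finset (α × κ)) : Prop :=
  ∀ i, #(T.filter fun e => e.1 = i) = if i ∈ S then m else 0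

theorem IsProperLift.fst_mem (h : IsProperLift m S T) {e : α × κ} (he : e ∈ T) : e.1 ∈ S := by
  by_contra hS
  have hrow := h e.1
  rw [if_neg hS, card_eq_zero, filter_eq_empty_iff] at hrow
  exact hrow he rfl

theorem IsProperLift.card [Fintype α] (h : IsProperLift m S T) : #T = #S * m := by
  rw [card_eq_sum_card_fiberwise fun e (_ : e ∈ T) => mem_univ e.1, sum_congr rfl fun i _ => h i]
  simp [sum_ite_mem]

theorem isProperLift_of_card [Fintype α] (hcard : #T = #S * m)
    (hrow : ∀ i ∈ S, #(T.filter fun e => e.1 = i) = m) : IsProperLift m S T := by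
  have hsum := card_eq_sum_card_fiberwise fun e (_ : e ∈ T) => mem_univ e.1
  rw [← sum_sdiff (subset_univ S), sum_congr rfl hrow, sum_const, smul_eq_mul, hcard] at hsum
  have hout := sum_eq_zero_iff.mp (by omega : ∑ i ∈ univ \ S, #(T.filter fun e => e.1 = i) = 0)
  intro i
  split_ifs with hi
  · exact hrow i hi
  · exact hout i (by simpa using hi)

theorem IsProperLift.swapCompress [DecidableEq κ] (h : IsProperLift m S T) {p q : α × κ}
    (hpq : p.1 = q.1) : IsProperLift m S (swapCompress p q T) := fun i => by
  rw [card_filter_swapCompress hpq, h i]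

theorem IsProperLift.map_prodMap {κ' : Type*} (h : IsProperLift m S T) (g : κ ↪ κ') :
    IsProperLift m S (T.map ((Function.Embedding.refl α).prodMap g)) := fun i => by
  rw [filter_map, card_map]
  exact h i

theorem IsProperLift.exists_notMem [DecidableEq κ] {C : Finset κ} (h : IsProperLift #C S T)
    {i : α} {j : κ} (hij : (i, j) ∈ T) (hj : j ∉ C) : ∃ t ∈ C, (i, t) ∉ T := by
  by_contra! hC
  have hsub : C.map (Function.Embedding.sectR i κ) ⊂ T.filter fun e => e.1 = i := by
    refine (ssubset_iff_of_subset fun e he => ?_).2 ⟨(i, j), mem_filter.2 ⟨hij, rfl⟩, ?_⟩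
    · obtain ⟨t, ht, rfl⟩ := mem_map.1 he
      exact mem_filter.2 ⟨hC t ht, rfl⟩
    · simpa using hj
  have hlt := card_lt_card hsub
  rw [card_map, h i, if_pos (h.fst_mem hij)] at hlt
  exact lt_irrefl _ hlt

theorem IsProperLift.eq_product [Fintype α] {C : Finset κ} (h : IsProperLift #C S T)
    (hC : ∀ e ∈ T, e.2 ∈ C) : T = S ×ˢ C :=
  eq_of_subset_of_card_le (fun e he => mem_product.2 ⟨h.fst_mem he, hC e he⟩)
    (by rw [card_product, h.card])

end ProperLift

section MaxWeight

variable {β ι : Type*} {F : Finset β} (hF : F.Nonempty)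

def maxWeight (ψ : β → Finset ι) (x : ι → ℝ) : ℝ :=
  F.sup' hF fun S => ∑ e ∈ ψ S, x e

theorem maxWeight_comp_eq_sup' {Ω : Type*} (ψ : β → Finset ι) (X : Ω → ι → ℝ) :
    (fun ω => maxWeight hF ψ (X ω)) = F.sup' hF fun S ω => ∑ e ∈ ψ S, X ω e := by
  ext ω
  simp [maxWeight, Finset.sup'_apply]

theorem measurable_maxWeight (ψ : β → Finset ι) : Measurable (maxWeight hF ψ) := by
  change Measurable fun x => maxWeight hF ψ (id x)
  rw [maxWeight_comp_eq_sup']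
  exact measurable_sup' hF fun S _ => Finset.measurable_sum _ fun e _ => measurable_pi_apply e

theorem integrable_maxWeight {Ω : Type*} [MeasurableSpace Ω] {ν : Measure Ω} (ψ : β → Finset ι)
    {X : Ω → ι → ℝ} (hX : ∀ e, Integrable (fun ω => X ω e) ν) :
    Integrable (fun ω => maxWeight hF ψ (X ω)) ν := by
  rw [maxWeight_comp_eq_sup']
  exact sup'_induction hF _ (p := fun f => Integrable f ν) (fun _ hf _ hg => hf.sup hg)
    fun S _ => integrable_finsetSum _ fun e _ => hX e

theorem maxWeight_congr {ψ χ : β → Finset ι} (h : ∀ S ∈ F, ψ S = χ S) :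
    maxWeight hF ψ = maxWeight hF χ :=
  funext fun _ => sup'_congr hF rfl fun S hS => by rw [h S hS]

theorem maxWeight_map {ι' : Type*} (ψ : β → Finset ι) (g : ι ↪ ι') (x : ι' → ℝ) :
    maxWeight hF (fun S => (ψ S).map g) x = maxWeight hF ψ fun e => x (g e) := by
  simp only [maxWeight, sum_map]

theorem maxWeight_swapCompress_add_le [DecidableEq ι] (ψ : β → Finset ι) (p q : ι)
    (x : ι → ℝ) :
    maxWeight hF (fun S => swapCompress p q (ψ S)) x
        + maxWeight hF (fun S => swapCompress p q (ψ S)) (fun e => x (Equiv.swap p q e))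
      ≤ maxWeight hF ψ x + maxWeight hF ψ fun e => x (Equiv.swap p q e) := by
  wlog hx : x p ≤ x q generalizing x
  · have h := this (fun e => x (Equiv.swap p q e)) (by simpa using (not_le.1 hx).le)
    simp only [Equiv.swap_apply_self] at h
    linarith
  simp only [maxWeight, (sum_swapCompress_eq_max_min x hx).1, (sum_swapCompress_eq_max_min x hx).2]
  exact sup'_max_add_sup'_min_le hF _ _

end MaxWeight

section IID

theorem integral_comp_eq_integral_pi {D : Measure ℝ} [SigmaFinite D] {Ω ι : Type*}
    [MeasurableSpace Ω] [Fintype ι] {μ : Measure Ω} [IsProbabilityMeasure μ] {X : ι → Ω → ℝ}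
    (hX : ∀ i, AEMeasurable (X i) μ)
    (hind : iIndepFun X μ) (hlaw : ∀ i, μ.map (X i) = D) {f : (ι → ℝ) → ℝ} (hf : Measurable f) :
    ∫ ω, f (fun i => X i ω) ∂μ = ∫ x, f x ∂(Measure.pi fun _ : ι => D) := by
  have hmap : μ.map (fun ω i => X i ω) = Measure.pi fun _ => D := by
    rw [(iIndepFun_iff_map_fun_eq_pi_map hX).1 hind]
    simp only [hlaw]
  rw [← hmap, integral_map (aemeasurable_pi_lambda _ hX) hf.aestronglyMeasurable]

variable {D : Measure ℝ} [IsProbabilityMeasure D]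

theorem integral_comp_pi_of_injective {ι ι' : Type*} [Fintype ι] [Fintype ι'] {g : ι' → ι}
    (hg : Function.Injective g) {f : (ι' → ℝ) → ℝ} (hf : Measurable f) :
    ∫ x, f (fun e => x (g e)) ∂(Measure.pi fun _ : ι => D)
      = ∫ y, f y ∂(Measure.pi fun _ : ι' => D) :=
  integral_comp_eq_integral_pi (fun e => (measurable_pi_apply (g e)).aemeasurable)
    ((iIndepFun_pi fun _ => aemeasurable_id).precomp hg)
    (fun e => (measurePreserving_eval _ (g e)).map_eq) hf

variable {β ι : Type*} [Fintype ι] {F : Finset β} (hF : F.Nonempty)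

theorem integral_maxWeight_map {ι' : Type*} [Fintype ι'] (ψ : β → Finset ι') (g : ι' ↪ ι) :
    ∫ x, maxWeight hF (fun S => (ψ S).map g) x ∂(Measure.pi fun _ : ι => D)
      = ∫ y, maxWeight hF ψ y ∂(Measure.pi fun _ : ι' => D) := by
  simp only [maxWeight_map]
  exact integral_comp_pi_of_injective g.injective (measurable_maxWeight hF ψ)

theorem integral_maxWeight_swapCompress_le [DecidableEq ι]
    (hcoord : ∀ e, Integrable (fun x : ι → ℝ => x e) (Measure.pi fun _ => D))
    (ψ : β → Finset ι) (p q : ι) :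
    ∫ x, maxWeight hF (fun S => swapCompress p q (ψ S)) x ∂(Measure.pi fun _ => D)
      ≤ ∫ x, maxWeight hF ψ x ∂(Measure.pi fun _ => D) := by
  set σ := Equiv.swap p q
  have hinv (χ : β → Finset ι) : ∫ x, maxWeight hF χ (fun e => x (σ e)) ∂(Measure.pi fun _ => D)
      = ∫ x, maxWeight hF χ x ∂(Measure.pi fun _ => D) :=
    integral_comp_pi_of_injective σ.injective (measurable_maxWeight hF χ)
  have hI (χ : β → Finset ι) : Integrable (maxWeight hF χ) (Measure.pi fun _ => D) :=
    integrable_maxWeight hF χ hcoord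
  have hIσ (χ : β → Finset ι) :
      Integrable (fun x => maxWeight hF χ fun e => x (σ e)) (Measure.pi fun _ => D) :=
    integrable_maxWeight hF χ fun e => hcoord (σ e)
  have key := integral_mono ((hI _).add (hIσ _)) ((hI ψ).add (hIσ ψ))
    (maxWeight_swapCompress_add_le hF ψ p q)
  simp only [Pi.add_apply] at key
  rw [integral_add (hI _) (hIσ _), integral_add (hI ψ) (hIσ ψ), hinv, hinv] at key
  linarith

end IID

section RowCompression

variable {α κ : Type*} [DecidableEq α] [DecidableEq κ]

def offColumnCount (F : Finset (Finset α)) (C : Finset κ) (ψ : Finset α → Finset (α × κ)) : ℕ :=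
  ∑ S ∈ F, #((ψ S).filter fun e => e.2 ∉ C)

theorem offColumnCount_swapCompress_lt {F : Finset (Finset α)} {C : Finset κ}
    {ψ : Finset α → Finset (α × κ)} {p q : α × κ} (hp : p.2 ∉ C) (hq : q.2 ∈ C) {S₀ : Finset α}
    (hS₀ : S₀ ∈ F) (h₀ : p ∈ ψ S₀ ∧ q ∉ ψ S₀) :
    offColumnCount F C (fun S => swapCompress p q (ψ S)) < offColumnCount F C ψ := by
  have hlt {T : Finset (α × κ)} (hT : p ∈ T ∧ q ∉ T) :=
    card_filter_swapCompress_lt (P := fun e => e.2 ∉ C) hp (not_not.2 hq) hT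
  refine sum_lt_sum (fun S _ => ?_) ⟨S₀, hS₀, hlt h₀⟩
  by_cases h : p ∈ ψ S ∧ q ∉ ψ S
  · exact (hlt h).le
  · simp only [swapCompress, if_neg h, le_refl]

variable [Fintype α] [Fintype κ] {D : Measure ℝ} [IsProbabilityMeasure D]

theorem integral_maxWeight_product_le
    (hcoord : ∀ e, Integrable (fun x : α × κ → ℝ => x e) (Measure.pi fun _ => D))
    {F : Finset (Finset α)} (hF : F.Nonempty) (C : Finset κ) {ψ : Finset α → Finset (α × κ)}
    (hψ : ∀ S ∈ F, IsProperLift #C S (ψ S)) :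
    ∫ x, maxWeight hF (fun S => S ×ˢ C) x ∂(Measure.pi fun _ => D)
      ≤ ∫ x, maxWeight hF ψ x ∂(Measure.pi fun _ => D) := by
  induction hN : offColumnCount F C ψ using Nat.strong_induction_on generalizing ψ with
  | _ N ih =>
  obtain rfl | hN0 := eq_or_ne N 0
  · have hcol (S : Finset α) (hS : S ∈ F) : ∀ e ∈ ψ S, e.2 ∈ C := by
      have hS0 := sum_eq_zero_iff.1 hN S hS
      rw [card_eq_zero, filter_eq_empty_iff] at hS0
      exact fun e he => not_not.1 (hS0 he)
    rw [maxWeight_congr hF fun S hS => (hψ S hS).eq_product (hcol S hS)]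
  · obtain ⟨S₀, hS₀, hS₀N⟩ := exists_ne_zero_of_sum_ne_zero (hN ▸ hN0 : offColumnCount F C ψ ≠ 0)
    obtain ⟨⟨i, j⟩, hij⟩ := card_ne_zero.1 hS₀N
    rw [mem_filter] at hij
    obtain ⟨t, ht, hit⟩ := (hψ S₀ hS₀).exists_notMem hij.1 hij.2
    calc _ ≤ ∫ x, maxWeight hF (fun S => swapCompress (i, j) (i, t) (ψ S)) x
            ∂(Measure.pi fun _ => D) :=
          ih _ (hN ▸ offColumnCount_swapCompress_lt hij.2 ht hS₀ ⟨hij.1, hit⟩)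
            (fun S hS => (hψ S hS).swapCompress rfl) rfl
      _ ≤ _ := integral_maxWeight_swapCompress_le hF hcoord ψ _ _

end RowCompression

theorem stmt8_general {Ω : Type*} [MeasurableSpace Ω] (μ : Measure Ω) [IsProbabilityMeasure μ]
    (n k ℓ : ℕ)
    (F : Finset (Finset (Fin n))) (hF : F.Nonempty) (hk : ∀ S ∈ F, S.card = k)
    (φ : Finset (Fin n) → Finset (Fin n × Fin n))
    (hφcard : ∀ S ∈ F, (φ S).card = k * ℓ)
    (hφrow : ∀ S ∈ F, ∀ i ∈ S, ((φ S).filter fun e => e.1 = i).card = ℓ)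
    (D : Measure ℝ) [IsProbabilityMeasure D]
    (A : Fin n × Fin ℓ → Ω → ℝ) (B : Fin n × Fin n → Ω → ℝ)
    (hAmeas : ∀ e, Measurable (A e)) (hBmeas : ∀ e, Measurable (B e))
    (hAindep : iIndepFun A μ)
    (hBindep : iIndepFun B μ)
    (hAdist : ∀ e, μ.map (A e) = D) (hBdist : ∀ e, μ.map (B e) = D)
    (hBint : ∀ e, Integrable (B e) μ) :
    ∫ ω, F.sup' hF (fun S => ∑ i ∈ S, ∑ j : Fin ℓ, A (i, j) ω) ∂μ
      ≤ ∫ ω, F.sup' hF (fun S => ∑ e ∈ φ S, B e ω) ∂μ := by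
  let gA : Fin n × Fin ℓ ↪ Fin n × (Fin ℓ ⊕ Fin n) := (Function.Embedding.refl _).prodMap .inl
  let gB : Fin n × Fin n ↪ Fin n × (Fin ℓ ⊕ Fin n) := (Function.Embedding.refl _).prodMap .inr
  let C : Finset (Fin ℓ ⊕ Fin n) := univ.map .inl
  have hcoord (e : Fin n × (Fin ℓ ⊕ Fin n)) :
      Integrable (fun x => x e) (Measure.pi fun _ => D) := by
    have hD := (integrable_map_measure aestronglyMeasurable_id
      (hBmeas (e.1, e.1)).aemeasurable).2 (hBint (e.1, e.1))
    rw [hBdist] at hD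
    exact (measurePreserving_eval (fun _ => D) e).integrable_comp_of_integrable hD
  have hlift (S : Finset (Fin n)) (hS : S ∈ F) : IsProperLift #C S ((φ S).map gB) := by
    rw [show #C = ℓ by simp [C]]
    exact (isProperLift_of_card (by rw [hφcard S hS, hk S hS]) (hφrow S hS)).map_prodMap _
  calc ∫ ω, F.sup' hF (fun S => ∑ i ∈ S, ∑ j : Fin ℓ, A (i, j) ω) ∂μ
      = ∫ x, maxWeight hF (fun S => S ×ˢ (univ : Finset (Fin ℓ))) x ∂(Measure.pi fun _ => D) := by
        rw [← integral_comp_eq_integral_pi (fun e => (hAmeas e).aemeasurable) hAindep hAdist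
          (measurable_maxWeight hF _)]
        simp only [maxWeight, sum_product]
    _ = ∫ x, maxWeight hF (fun S => S ×ˢ C) x ∂(Measure.pi fun _ => D) := by
        rw [← integral_maxWeight_map hF _ gA]
        simp only [gA, C, prodMap_map_product, map_refl]
    _ ≤ ∫ x, maxWeight hF (fun S => (φ S).map gB) x ∂(Measure.pi fun _ => D) :=
        integral_maxWeight_product_le hcoord hF _ hlift
    _ = ∫ ω, F.sup' hF (fun S => ∑ e ∈ φ S, B e ω) ∂μ := by
        rw [integral_maxWeight_map hF φ gB]
        exact (integral_comp_eq_integral_pi (fun e => (hBmeas e).aemeasurable) hBindep hBdist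
          (measurable_maxWeight hF φ)).symm

/-- Comparison lemma for proper liftings: if `F` is a `k`-uniform family over `[n]`,
`φ` is a proper lifting (each `S ∈ F` is sent to a `kℓ`-element subset of `[n]×[n]` with
exactly `ℓ` elements in each row `{i}×[n]`, `i ∈ S`), and `{A_{i,j}}`, `{Ã_{i,j}}` are
i.i.d. with common distribution `D`, then
`E[sup_{S∈F} Σ_{(i,j)∈S×[ℓ]} A_{i,j}] ≤ E[sup_{S∈F} Σ_{(i,j)∈φ(S)} Ã_{i,j}]`. -/
theorem stmt8 {Ω : Type*} [MeasurableSpace Ω] (μ : Measure Ω) [IsProbabilityMeasure μ]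
    (n k ℓ : ℕ) (hℓ : 1 ≤ ℓ)
    (F : Finset (Finset (Fin n))) (hF : F.Nonempty) (hk : ∀ S ∈ F, S.card = k)
    (φ : Finset (Fin n) → Finset (Fin n × Fin n))
    (hφcard : ∀ S ∈ F, (φ S).card = k * ℓ)
    (hφrow : ∀ S ∈ F, ∀ i ∈ S, ((φ S).filter fun e => e.1 = i).card = ℓ)
    (D : Measure ℝ) [IsProbabilityMeasure D]
    (A : Fin n × Fin ℓ → Ω → ℝ) (B : Fin n × Fin n → Ω → ℝ)
    (hAmeas : ∀ e, Measurable (A e)) (hBmeas : ∀ e, Measurable (B e))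
    (hAindep : iIndepFun A μ)
    (hBindep : iIndepFun B μ)
    (hAdist : ∀ e, μ.map (A e) = D) (hBdist : ∀ e, μ.map (B e) = D)
    (hAint : ∀ e, Integrable (A e) μ) (hBint : ∀ e, Integrable (B e) μ) :
    ∫ ω, F.sup' hF (fun S => ∑ i ∈ S, ∑ j : Fin ℓ, A (i, j) ω) ∂μ
      ≤ ∫ ω, F.sup' hF (fun S => ∑ e ∈ φ S, B e ω) ∂μ :=
  stmt8_general μ n k ℓ F hF hk φ hφcard hφrow D A B hAmeas hBmeas hAindep hBindep hAdist hBdist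
    hBint
end

section
/- If an ℓ-uniform family 𝒮 ⊆ 2^{[n]} is a (p^ℓ, ε/ℓ²)-robust sunflower, then it is also a (p, ε)-robust clique sunflower. -/
open MeasureTheory ENNReal

/-- The random-subset measure on `U → Bool` in which each coordinate is `true`
independently with probability `p`. -/
noncomputable def randFun (U : Type*) [Fintype U] [DecidableEq U] (p : ℝ) :
    Measure (U → Bool) :=
  ∑ f : U → Bool,
    (∏ u : U, if f u then ENNReal.ofReal p else ENNReal.ofReal (1 - p)) • Measure.dirac f

/-- The core (common intersection) of a family of sets. -/
def core {U : Type*} [Fintype U] [DecidableEq U] (𝒮 : Finset (Finset U)) : Finset U := 𝒮.inf id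

/-- `𝒮` is a `(q, ε)`-robust sunflower: sampling each element of `U` independently with
probability `q`, with probability at least `1 - ε` some `S ∈ 𝒮` satisfies `S ⊆ W ∪ C`,
where `C` is the core of `𝒮`. -/
def IsRobustSunflower {U : Type*} [Fintype U] [DecidableEq U]
    (𝒮 : Finset (Finset U)) (q ε : ℝ) : Prop :=
  ENNReal.ofReal (1 - ε) ≤
    randFun U q {W | ∃ S ∈ 𝒮, ∀ x ∈ S, x ∈ core 𝒮 ∨ W x = true}

/-- The edge set `K_S` of the complete graph on the vertex set `S`. -/
def cliqueEdges {n : ℕ} (S : Finset (Fin n)) : Finset (Sym2 (Fin n)) :=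
  ((S ×ˢ S).filter fun q => q.1 ≠ q.2).image fun q => s(q.1, q.2)

/-- `𝒮` is a `(p, ε)`-robust clique sunflower: for `G ~ G(n,p)`, with probability at
least `1 - ε` some `S ∈ 𝒮` satisfies `K_S ⊆ G ∪ K_C`, where `C` is the core of `𝒮`. -/
def IsRobustCliqueSunflower {n : ℕ} (𝒮 : Finset (Finset (Fin n))) (p ε : ℝ) : Prop :=
  ENNReal.ofReal (1 - ε) ≤
    randFun (Sym2 (Fin n)) p
      {G | ∃ S ∈ 𝒮, ∀ e ∈ cliqueEdges S, e ∈ cliqueEdges (core 𝒮) ∨ G e = true}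

/-!
Reveal the random graph one vertex outside the core at a time. The edges at a vertex `z` are
independent of all other edges. If the other edges already give `K_{S \ {z}} ⊆ G ∪ K_C` for some
`S ∋ z`, the missing star from `z` to `S \ {z}` has at most `ℓ - 1` edges and is present with
probability at least `p ^ ℓ`, which is the probability that `z ∈ W`. Hence the probability that no
`K_S` is covered satisfies the same one-vertex recursion as the probability that no `S` is covered,
but with `≤`, and induction over the revealed vertices compares the two failure probabilities.
-/

section BernoulliWeight

variable {X : Type*} [Fintype X] [DecidableEq X] {r : ℝ}

noncomputable def bernoulliWeight (r : ℝ) (f : X → Bool) : ℝ≥0∞ :=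
  ∏ x, if f x then ENNReal.ofReal r else ENNReal.ofReal (1 - r)

theorem sum_bernoulliWeight_mul_prod (ψ : X → Bool → ℝ≥0∞) :
    ∑ f : X → Bool, bernoulliWeight r f * ∏ x, ψ x (f x) =
      ∏ x, (ENNReal.ofReal r * ψ x true + ENNReal.ofReal (1 - r) * ψ x false) := by
  have hbool (x : X) : ENNReal.ofReal r * ψ x true + ENNReal.ofReal (1 - r) * ψ x false =
      ∑ b : Bool, (if b then ENNReal.ofReal r else ENNReal.ofReal (1 - r)) * ψ x b := by
    simp
  simp_rw [hbool, Fintype.prod_sum, bernoulliWeight, ← Finset.prod_mul_distrib]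

theorem ofReal_add_ofReal_one_sub (hr0 : 0 ≤ r) (hr1 : r ≤ 1) :
    ENNReal.ofReal r + ENNReal.ofReal (1 - r) = 1 := by
  rw [← ENNReal.ofReal_add hr0 (by linarith), add_sub_cancel, ENNReal.ofReal_one]

theorem bernoulliWeight_piecewise_mul_piecewise (D : Finset X) (f g : X → Bool) :
    bernoulliWeight r (D.piecewise f g) * bernoulliWeight r (D.piecewise g f) =
      bernoulliWeight r f * bernoulliWeight r g := by
  simp only [bernoulliWeight, ← Finset.prod_mul_distrib]
  refine Finset.prod_congr rfl fun x _ => ?_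
  by_cases hx : x ∈ D <;> simp [hx, mul_comm]

theorem randFun_setOf (E : (X → Bool) → Prop) [DecidablePred E] :
    randFun X r {f | E f} = ∑ f : X → Bool, bernoulliWeight r f * if E f then 1 else 0 := by
  rw [randFun, Measure.finsetSum_apply]
  refine Finset.sum_congr rfl fun f _ => ?_
  simp [Measure.dirac_apply, Set.indicator_apply, bernoulliWeight]

theorem sum_bernoulliWeight (hr0 : 0 ≤ r) (hr1 : r ≤ 1) :
    ∑ f : X → Bool, bernoulliWeight r f = 1 := by
  simpa [ofReal_add_ofReal_one_sub hr0 hr1] using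
    sum_bernoulliWeight_mul_prod (r := r) fun (_ : X) _ => (1 : ℝ≥0∞)

theorem isProbabilityMeasure_randFun (hr0 : 0 ≤ r) (hr1 : r ≤ 1) :
    IsProbabilityMeasure (randFun X r) := by
  constructor
  simpa [sum_bernoulliWeight hr0 hr1] using randFun_setOf (X := X) (r := r) fun _ => True

theorem sum_bernoulliWeight_mul_apply (hr0 : 0 ≤ r) (hr1 : r ≤ 1) (z : X) (ψ : Bool → ℝ≥0∞) :
    ∑ f : X → Bool, bernoulliWeight r f * ψ (f z) =
      ENNReal.ofReal r * ψ true + ENNReal.ofReal (1 - r) * ψ false := by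
  have h := sum_bernoulliWeight_mul_prod (r := r) fun x b => if x = z then ψ b else 1
  simpa [ite_add_ite, ofReal_add_ofReal_one_sub hr0 hr1] using h

theorem sum_bernoulliWeight_mul_ite_forall (hr0 : 0 ≤ r) (hr1 : r ≤ 1) (B : Finset X) :
    ∑ f : X → Bool, bernoulliWeight r f * (if ∀ x ∈ B, f x = true then 1 else 0) =
      ENNReal.ofReal r ^ B.card := by
  have h := sum_bernoulliWeight_mul_prod (r := r)
    fun x b => if x ∈ B then (if b then 1 else 0) else 1
  simpa [Finset.prod_boole, apply_ite, ofReal_add_ofReal_one_sub hr0 hr1] using h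

theorem sum_bernoulliWeight_mul_ite_add (hr0 : 0 ≤ r) (hr1 : r ≤ 1) (E : (X → Bool) → Prop)
    [DecidablePred E] :
    ∑ f : X → Bool, bernoulliWeight r f * (if E f then 1 else 0) +
      ∑ f : X → Bool, bernoulliWeight r f * (if E f then 0 else 1) = 1 := by
  rw [← Finset.sum_add_distrib]
  convert sum_bernoulliWeight (X := X) hr0 hr1 using 2 with f
  split_ifs <;> simp

theorem sum_bernoulliWeight_mul_ite_forall_not (hr0 : 0 ≤ r) (hr1 : r ≤ 1) (B : Finset X) :
    ∑ f : X → Bool, bernoulliWeight r f * (if ∀ x ∈ B, f x = true then 0 else 1) =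
      1 - ENNReal.ofReal r ^ B.card := by
  have h := sum_bernoulliWeight_mul_ite_add hr0 hr1 fun f : X → Bool => ∀ x ∈ B, f x = true
  rw [sum_bernoulliWeight_mul_ite_forall hr0 hr1, add_comm] at h
  exact ENNReal.eq_sub_of_add_eq (by simp) h

theorem sum_bernoulliWeight_mul_eq_sum_piecewise (hr0 : 0 ≤ r) (hr1 : r ≤ 1) (D : Finset X)
    (Φ : (X → Bool) → ℝ≥0∞) :
    ∑ h : X → Bool, bernoulliWeight r h * Φ h =
      ∑ g : X → Bool, bernoulliWeight r g * ∑ f : X → Bool,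
        bernoulliWeight r f * Φ (D.piecewise f g) := by
  have hinv : Function.Involutive fun fg : (X → Bool) × (X → Bool) =>
      (D.piecewise fg.1 fg.2, D.piecewise fg.2 fg.1) := by
    intro fg
    ext x <;> by_cases hx : x ∈ D <;> simp [hx]
  calc ∑ h, bernoulliWeight r h * Φ h
      = ∑ fg : (X → Bool) × (X → Bool),
          bernoulliWeight r fg.1 * bernoulliWeight r fg.2 * Φ fg.1 := by
        simp_rw [Fintype.sum_prod_type, mul_right_comm _ _ (Φ _), ← Finset.mul_sum,
          sum_bernoulliWeight hr0 hr1, mul_one]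
    _ = ∑ fg : (X → Bool) × (X → Bool),
          bernoulliWeight r fg.2 * bernoulliWeight r fg.1 * Φ (D.piecewise fg.1 fg.2) := by
        refine (Fintype.sum_bijective _ hinv.bijective _ _ fun fg => ?_).symm
        rw [mul_comm (bernoulliWeight r fg.2), ← bernoulliWeight_piecewise_mul_piecewise D]
    _ = _ := by
        simp only [Fintype.sum_prod_type]
        rw [Finset.sum_comm]
        simp only [Finset.mul_sum, mul_assoc]

theorem sum_bernoulliWeight_mul_eq_sum_update (hr0 : 0 ≤ r) (hr1 : r ≤ 1) (z : X)
    (Φ : (X → Bool) → ℝ≥0∞) :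
    ∑ h : X → Bool, bernoulliWeight r h * Φ h =
      ∑ g : X → Bool, bernoulliWeight r g * (ENNReal.ofReal r * Φ (Function.update g z true) +
        ENNReal.ofReal (1 - r) * Φ (Function.update g z false)) := by
  rw [sum_bernoulliWeight_mul_eq_sum_piecewise hr0 hr1 {z}]
  refine Finset.sum_congr rfl fun g _ => ?_
  simp only [Finset.piecewise_singleton]
  rw [sum_bernoulliWeight_mul_apply hr0 hr1 z fun b => Φ (Function.update g z b)]

end BernoulliWeight


section Comparison

variable {V : Type*} [DecidableEq V]

-- `S ⊆ W ∪ C`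
def IsCoveredMod (C : Finset V) (W : V → Bool) (S : Finset V) : Prop :=
  ∀ x ∈ S, x ∈ C ∨ W x = true

-- `K_S ⊆ G ∪ K_C`
def IsCliqueCoveredMod (C : Finset V) (G : Sym2 V → Bool) (S : Finset V) : Prop :=
  ∀ x ∈ S, ∀ y ∈ S, x ≠ y → (x ∈ C ∧ y ∈ C) ∨ G s(x, y) = true

instance (C : Finset V) (W : V → Bool) : DecidablePred (IsCoveredMod C W) :=
  fun _ => inferInstanceAs (Decidable (∀ _ ∈ _, _))

instance (C : Finset V) (G : Sym2 V → Bool) : DecidablePred (IsCliqueCoveredMod C G) :=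
  fun _ => inferInstanceAs (Decidable (∀ _ ∈ _, _))

variable {C S : Finset V} {z : V}

theorem isCoveredMod_update_true (W : V → Bool) :
    IsCoveredMod C (Function.update W z true) S ↔ IsCoveredMod C W (S.erase z) := by
  simp only [IsCoveredMod, Finset.mem_erase]
  refine forall_congr' fun x => ?_
  by_cases hx : x = z <;> simp [hx]

theorem isCoveredMod_update_false (hzC : z ∉ C) (W : V → Bool) :
    IsCoveredMod C (Function.update W z false) S ↔ z ∉ S ∧ IsCoveredMod C W S := by
  simp only [IsCoveredMod]
  constructor
  · intro h
    refine ⟨fun hzS => ?_, fun x hx => ?_⟩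
    · simpa [hzC] using h z hzS
    · obtain rfl | hxz := eq_or_ne x z
      · simpa [hzC] using h x hx
      · simpa [hxz] using h x hx
  · rintro ⟨hzS, h⟩ x hx
    simpa [show x ≠ z from fun hxz => hzS (hxz ▸ hx)] using h x hx

theorem isCliqueCoveredMod_iff_of_mem (hzS : z ∈ S) (hzC : z ∉ C) (G : Sym2 V → Bool) :
    IsCliqueCoveredMod C G S ↔
      (∀ y ∈ S.erase z, G s(z, y) = true) ∧ IsCliqueCoveredMod C G (S.erase z) := by
  constructor
  · intro h
    refine ⟨fun y hy => ?_, fun x hx y hy =>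
      h x (Finset.mem_of_mem_erase hx) y (Finset.mem_of_mem_erase hy)⟩
    exact (h z hzS y (Finset.mem_of_mem_erase hy) (Finset.ne_of_mem_erase hy).symm).resolve_left
      fun hzyC => hzC hzyC.1
  · rintro ⟨hstar, hrest⟩ x hx y hy hxy
    obtain rfl | hxz := eq_or_ne x z
    · exact Or.inr (hstar y (Finset.mem_erase.2 ⟨hxy.symm, hy⟩))
    obtain rfl | hyz := eq_or_ne y z
    · exact Or.inr (Sym2.eq_swap ▸ hstar x (Finset.mem_erase.2 ⟨hxz, hx⟩))
    exact hrest x (Finset.mem_erase.2 ⟨hxz, hx⟩) y (Finset.mem_erase.2 ⟨hyz, hy⟩) hxy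

variable [Fintype V]

theorem isCliqueCoveredMod_piecewise_of_notMem (hzS : z ∉ S) (f g : Sym2 V → Bool) :
    IsCliqueCoveredMod C ((Finset.univ.filter (z ∈ ·)).piecewise f g) S ↔
      IsCliqueCoveredMod C g S := by
  refine forall₂_congr fun x hx => forall₂_congr fun y hy => imp_congr_right fun _ => ?_
  have hzxy : z ∉ s(x, y) := by
    rw [Sym2.mem_iff]
    rintro (rfl | rfl) <;> contradiction
  rw [Finset.piecewise_eq_of_notMem _ _ _ (by simpa using hzxy)]

theorem isCliqueCoveredMod_piecewise_of_mem (hzS : z ∈ S) (hzC : z ∉ C) (f g : Sym2 V → Bool) :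
    IsCliqueCoveredMod C ((Finset.univ.filter (z ∈ ·)).piecewise f g) S ↔
      (∀ y ∈ S.erase z, f s(z, y) = true) ∧ IsCliqueCoveredMod C g (S.erase z) := by
  rw [isCliqueCoveredMod_iff_of_mem hzS hzC,
    isCliqueCoveredMod_piecewise_of_notMem (Finset.notMem_erase z S)]
  simp [Finset.piecewise]

noncomputable def setFailProb (q : ℝ) (C : Finset V) (F : Finset (Finset V)) : ℝ≥0∞ :=
  ∑ W : V → Bool, bernoulliWeight q W * if ∃ S ∈ F, IsCoveredMod C W S then 0 else 1

noncomputable def cliqueFailProb (p : ℝ) (C : Finset V) (F : Finset (Finset V)) : ℝ≥0∞ :=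
  ∑ G : Sym2 V → Bool, bernoulliWeight p G * if ∃ S ∈ F, IsCliqueCoveredMod C G S then 0 else 1

theorem setFailProb_eq {q : ℝ} (hq0 : 0 ≤ q) (hq1 : q ≤ 1) (hzC : z ∉ C) (F : Finset (Finset V)) :
    setFailProb q C F =
      ENNReal.ofReal q * setFailProb q C (F.image (·.erase z)) +
        ENNReal.ofReal (1 - q) * setFailProb q C (F.filter (z ∉ ·)) := by
  rw [setFailProb, sum_bernoulliWeight_mul_eq_sum_update hq0 hq1 z]
  simp only [isCoveredMod_update_true, isCoveredMod_update_false hzC, setFailProb,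
    Finset.exists_mem_image, Finset.mem_filter, and_assoc, Finset.mul_sum, mul_add,
    Finset.sum_add_distrib, mul_left_comm _ (ENNReal.ofReal _)]

theorem sum_bernoulliWeight_mul_cliqueFail_piecewise_le {p q : ℝ} (hp0 : 0 ≤ p) (hp1 : p ≤ 1)
    (hq0 : 0 ≤ q) (hq1 : q ≤ 1) (hzC : z ∉ C) (F : Finset (Finset V))
    (hq : ∀ S ∈ F, z ∈ S → q ≤ p ^ (S.erase z).card) (g : Sym2 V → Bool) :
    ∑ f : Sym2 V → Bool, bernoulliWeight p f *
        (if ∃ S ∈ F, IsCliqueCoveredMod C ((Finset.univ.filter (z ∈ ·)).piecewise f g) S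
          then 0 else 1) ≤
      ENNReal.ofReal q * (if ∃ S ∈ F, IsCliqueCoveredMod C g (S.erase z) then 0 else 1) +
        ENNReal.ofReal (1 - q) * (if ∃ S ∈ F, z ∉ S ∧ IsCliqueCoveredMod C g S then 0 else 1) := by
  by_cases h0 : ∃ S ∈ F, z ∉ S ∧ IsCliqueCoveredMod C g S
  · obtain ⟨S, hS, hzS, hSg⟩ := h0
    have hcov (f : Sym2 V → Bool) :
        ∃ S ∈ F, IsCliqueCoveredMod C ((Finset.univ.filter (z ∈ ·)).piecewise f g) S :=
      ⟨S, hS, (isCliqueCoveredMod_piecewise_of_notMem hzS f g).2 hSg⟩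
    simp [hcov]
  rw [if_neg h0, mul_one]
  by_cases h1 : ∃ S ∈ F, IsCliqueCoveredMod C g (S.erase z)
  · obtain ⟨S, hS, hSg⟩ := h1
    have hzS : z ∈ S := by
      by_contra hzS
      exact h0 ⟨S, hS, hzS, by rwa [Finset.erase_eq_of_notMem hzS] at hSg⟩
    rw [if_pos ⟨S, hS, hSg⟩, mul_zero, zero_add]
    calc _ ≤ ∑ f : Sym2 V → Bool, bernoulliWeight p f *
            (if ∀ e ∈ (S.erase z).image (s(z, ·)), f e = true then 0 else 1) := by
          gcongr with f
          by_cases hstar : ∀ e ∈ (S.erase z).image (s(z, ·)), f e = true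
          · rw [if_pos ⟨S, hS, (isCliqueCoveredMod_piecewise_of_mem hzS hzC f g).2
              ⟨Finset.forall_mem_image.1 hstar, hSg⟩⟩]
            exact zero_le
          · rw [if_neg hstar]
            split_ifs <;> simp
      _ = 1 - ENNReal.ofReal p ^ (S.erase z).card := by
          rw [sum_bernoulliWeight_mul_ite_forall_not hp0 hp1,
            Finset.card_image_of_injective _ fun _ _ => Sym2.congr_right.1]
      _ ≤ ENNReal.ofReal (1 - q) := by
          rw [ENNReal.ofReal_sub _ hq0, ENNReal.ofReal_one, ← ENNReal.ofReal_pow hp0]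
          exact tsub_le_tsub_left (ENNReal.ofReal_le_ofReal (hq S hS hzS)) 1
  · rw [if_neg h1, mul_one, ofReal_add_ofReal_one_sub hq0 hq1]
    calc _ ≤ ∑ f : Sym2 V → Bool, bernoulliWeight p f :=
          Finset.sum_le_sum fun f _ => mul_le_of_le_one_right' (by split_ifs <;> simp)
      _ = 1 := sum_bernoulliWeight hp0 hp1

theorem cliqueFailProb_le {p q : ℝ} (hp0 : 0 ≤ p) (hp1 : p ≤ 1) (hq0 : 0 ≤ q) (hq1 : q ≤ 1)
    (hzC : z ∉ C) (F : Finset (Finset V)) (hq : ∀ S ∈ F, z ∈ S → q ≤ p ^ (S.erase z).card) :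
    cliqueFailProb p C F ≤
      ENNReal.ofReal q * cliqueFailProb p C (F.image (·.erase z)) +
        ENNReal.ofReal (1 - q) * cliqueFailProb p C (F.filter (z ∉ ·)) := by
  rw [cliqueFailProb, sum_bernoulliWeight_mul_eq_sum_piecewise hp0 hp1 (Finset.univ.filter (z ∈ ·))]
  calc _ ≤ ∑ g : Sym2 V → Bool, bernoulliWeight p g *
        (ENNReal.ofReal q * (if ∃ S ∈ F, IsCliqueCoveredMod C g (S.erase z) then 0 else 1) +
          ENNReal.ofReal (1 - q) *
            (if ∃ S ∈ F, z ∉ S ∧ IsCliqueCoveredMod C g S then 0 else 1)) := by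
        gcongr with g
        exact sum_bernoulliWeight_mul_cliqueFail_piecewise_le hp0 hp1 hq0 hq1 hzC F hq g
    _ = _ := by
        simp only [cliqueFailProb, Finset.exists_mem_image, Finset.mem_filter, and_assoc,
          Finset.mul_sum, mul_add, Finset.sum_add_distrib, mul_left_comm _ (ENNReal.ofReal _)]

theorem cliqueFailProb_eq_setFailProb_of_subset {p q : ℝ} (hp0 : 0 ≤ p) (hp1 : p ≤ 1)
    (hq0 : 0 ≤ q) (hq1 : q ≤ 1) {F : Finset (Finset V)} (hF : ∀ S ∈ F, S ⊆ C) :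
    cliqueFailProb p C F = setFailProb q C F := by
  have hclique (G : Sym2 V → Bool) : (∃ S ∈ F, IsCliqueCoveredMod C G S) ↔ F.Nonempty :=
    ⟨fun ⟨S, hS, _⟩ => ⟨S, hS⟩,
      fun ⟨S, hS⟩ => ⟨S, hS, fun x hx y hy _ => Or.inl ⟨hF S hS hx, hF S hS hy⟩⟩⟩
  have hset (W : V → Bool) : (∃ S ∈ F, IsCoveredMod C W S) ↔ F.Nonempty :=
    ⟨fun ⟨S, hS, _⟩ => ⟨S, hS⟩, fun ⟨S, hS⟩ => ⟨S, hS, fun x hx => Or.inl (hF S hS hx)⟩⟩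
  simp only [cliqueFailProb, setFailProb, hclique, hset, ← Finset.sum_mul,
    sum_bernoulliWeight hp0 hp1, sum_bernoulliWeight hq0 hq1]

theorem cliqueFailProb_le_setFailProb_of_subset_union {p : ℝ} {m : ℕ} (hp0 : 0 ≤ p) (hp1 : p ≤ 1)
    {T : Finset V} (hTC : Disjoint T C) {F : Finset (Finset V)} (hFT : ∀ S ∈ F, S ⊆ T ∪ C)
    (hFm : ∀ S ∈ F, S.card ≤ m + 1) :
    cliqueFailProb p C F ≤ setFailProb (p ^ m) C F := by
  have hq0 : 0 ≤ p ^ m := pow_nonneg hp0 m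
  have hq1 : p ^ m ≤ 1 := pow_le_one₀ hp0 hp1
  induction T using Finset.induction_on generalizing F with
  | empty => exact (cliqueFailProb_eq_setFailProb_of_subset hp0 hp1 hq0 hq1 (by simpa using hFT)).le
  | insert z T _ ih =>
    have hzC : z ∉ C := Finset.disjoint_left.1 hTC (Finset.mem_insert_self z T)
    have hTC' : Disjoint T C := hTC.mono_left (Finset.subset_insert z T)
    have hFT' (S : Finset V) (hS : S ∈ F) : S ⊆ insert z (T ∪ C) :=
      Finset.insert_union z T C ▸ hFT S hS
    calc cliqueFailProb p C F
        ≤ ENNReal.ofReal (p ^ m) * cliqueFailProb p C (F.image (·.erase z)) +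
            ENNReal.ofReal (1 - p ^ m) * cliqueFailProb p C (F.filter (z ∉ ·)) := by
          refine cliqueFailProb_le hp0 hp1 hq0 hq1 hzC F fun S hS hzS => ?_
          refine pow_le_pow_of_le_one hp0 hp1 ?_
          have := hFm S hS
          rw [Finset.card_erase_of_mem hzS]
          omega
      _ ≤ ENNReal.ofReal (p ^ m) * setFailProb (p ^ m) C (F.image (·.erase z)) +
            ENNReal.ofReal (1 - p ^ m) * setFailProb (p ^ m) C (F.filter (z ∉ ·)) := by
          gcongr <;> refine ih hTC' ?_ ?_
          · simpa using fun S hS => Finset.subset_insert_iff.1 (hFT' S hS)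
          · simpa using fun S hS => Finset.card_erase_le.trans (hFm S hS)
          · simpa using fun S hS hzS => (Finset.subset_insert_iff_of_notMem hzS).1 (hFT' S hS)
          · simpa using fun S hS _ => hFm S hS
      _ = setFailProb (p ^ m) C F := (setFailProb_eq hq0 hq1 hzC F).symm

theorem cliqueFailProb_le_setFailProb {p : ℝ} {m : ℕ} (hp0 : 0 ≤ p) (hp1 : p ≤ 1)
    {F : Finset (Finset V)} (hFm : ∀ S ∈ F, S.card ≤ m + 1) :
    cliqueFailProb p C F ≤ setFailProb (p ^ m) C F :=
  cliqueFailProb_le_setFailProb_of_subset_union hp0 hp1 (T := Finset.univ \ C)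
    Finset.sdiff_disjoint
    (fun S _ => by rw [Finset.sdiff_union_of_subset C.subset_univ]; exact S.subset_univ) hFm

theorem randFun_covered_le_randFun_cliqueCovered {p : ℝ} {m : ℕ} (hp0 : 0 ≤ p) (hp1 : p ≤ 1)
    {F : Finset (Finset V)} (hFm : ∀ S ∈ F, S.card ≤ m + 1) :
    randFun V (p ^ m) {W | ∃ S ∈ F, IsCoveredMod C W S} ≤
      randFun (Sym2 V) p {G | ∃ S ∈ F, IsCliqueCoveredMod C G S} := by
  have hset : randFun V (p ^ m) {W | ∃ S ∈ F, IsCoveredMod C W S} +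
      setFailProb (p ^ m) C F = 1 := by
    rw [randFun_setOf]
    exact sum_bernoulliWeight_mul_ite_add (pow_nonneg hp0 m) (pow_le_one₀ hp0 hp1) _
  have hclique : randFun (Sym2 V) p {G | ∃ S ∈ F, IsCliqueCoveredMod C G S} +
      cliqueFailProb p C F = 1 := by
    rw [randFun_setOf]
    exact sum_bernoulliWeight_mul_ite_add hp0 hp1 _
  have hfail_ne_top : setFailProb (p ^ m) C F ≠ ⊤ :=
    ne_top_of_le_ne_top one_ne_top (hset ▸ le_add_self)
  refine (ENNReal.add_le_add_iff_right hfail_ne_top).1 ?_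
  rw [hset, ← hclique]
  gcongr
  exact cliqueFailProb_le_setFailProb hp0 hp1 hFm

end Comparison

section CliqueEdges

variable {n : ℕ}

theorem forall_mem_cliqueEdges {S : Finset (Fin n)} {P : Sym2 (Fin n) → Prop} :
    (∀ e ∈ cliqueEdges S, P e) ↔ ∀ x ∈ S, ∀ y ∈ S, x ≠ y → P s(x, y) := by
  simp only [cliqueEdges, Finset.forall_mem_image, Finset.mem_filter, Finset.mem_product,
    Prod.forall, and_imp]
  exact ⟨fun h x hx y hy => h x y hx hy, fun h x y hx hy => h x hx y hy⟩

theorem mk_mem_cliqueEdges {C : Finset (Fin n)} {x y : Fin n} (hxy : x ≠ y) :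
    s(x, y) ∈ cliqueEdges C ↔ x ∈ C ∧ y ∈ C := by
  simp only [cliqueEdges, Finset.mem_image, Finset.mem_filter, Finset.mem_product, Prod.exists,
    Sym2.eq_iff]
  constructor
  · rintro ⟨a, b, ⟨⟨ha, hb⟩, -⟩, ⟨rfl, rfl⟩ | ⟨rfl, rfl⟩⟩
    exacts [⟨ha, hb⟩, ⟨hb, ha⟩]
  · rintro ⟨hx, hy⟩
    exact ⟨x, y, ⟨⟨hx, hy⟩, hxy⟩, Or.inl ⟨rfl, rfl⟩⟩

theorem forall_mem_cliqueEdges_iff_isCliqueCoveredMod (C S : Finset (Fin n))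
    (G : Sym2 (Fin n) → Bool) :
    (∀ e ∈ cliqueEdges S, e ∈ cliqueEdges C ∨ G e = true) ↔ IsCliqueCoveredMod C G S := by
  rw [forall_mem_cliqueEdges]
  exact forall₂_congr fun x _ => forall₂_congr fun y _ => forall_congr' fun hxy => by
    rw [mk_mem_cliqueEdges hxy]

end CliqueEdges

theorem stmt9_general {n ℓ : ℕ} (hℓ : 1 ≤ ℓ) (p ε : ℝ) (hp0 : 0 ≤ p) (hp1 : p ≤ 1)
    (𝒮 : Finset (Finset (Fin n))) (huni : ∀ S ∈ 𝒮, S.card = ℓ)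
    (h : IsRobustSunflower 𝒮 (p ^ ℓ) (ε / ℓ ^ 2)) :
    IsRobustCliqueSunflower 𝒮 p ε := by
  have hsucc := randFun_covered_le_randFun_cliqueCovered (C := core 𝒮) hp0 hp1
    fun S hS => (huni S hS).trans_le ℓ.le_succ
  have hℓ2 : (1 : ℝ) ≤ ℓ ^ 2 := one_le_pow₀ (by exact_mod_cast hℓ)
  have hε : 0 ≤ ε := by
    have h1 : ENNReal.ofReal (1 - ε / ℓ ^ 2) ≤ 1 := h.trans <|
      have := isProbabilityMeasure_randFun (X := Fin n) (pow_nonneg hp0 ℓ) (pow_le_one₀ hp0 hp1)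
      prob_le_one
    rw [ENNReal.ofReal_le_one, sub_le_self_iff] at h1
    simpa using (le_div_iff₀ (zero_lt_one.trans_le hℓ2)).1 h1
  unfold IsRobustCliqueSunflower
  simp_rw [forall_mem_cliqueEdges_iff_isCliqueCoveredMod]
  calc ENNReal.ofReal (1 - ε) ≤ ENNReal.ofReal (1 - ε / ℓ ^ 2) := by
        gcongr
        exact div_le_self hε hℓ2
    _ ≤ _ := h
    _ ≤ _ := hsucc

/-- If an `ℓ`-uniform family `𝒮` is a `(p^ℓ, ε/ℓ²)`-robust sunflower, then it is a
`(p, ε)`-robust clique sunflower. -/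
theorem stmt9 {n ℓ : ℕ} (hℓ : 1 ≤ ℓ) (p ε : ℝ) (hp0 : 0 ≤ p) (hp1 : p ≤ 1)
    (𝒮 : Finset (Finset (Fin n))) (h𝒮 : 𝒮.Nonempty) (huni : ∀ S ∈ 𝒮, S.card = ℓ)
    (h : IsRobustSunflower 𝒮 (p ^ ℓ) (ε / ℓ ^ 2)) :
    IsRobustCliqueSunflower 𝒮 p ε :=
  stmt9_general hℓ p ε hp0 hp1 𝒮 huni h
end

section
/- Using the bound S(ℓ,k) ≤ (ℓ·k)^ℓ on sunflower numbers and the fact that every ℓ-uniform k-sunflower is a (p, exp(-k·p^{binom(ℓ,2)}))-robust clique sunflower, one obtains RCB(ℓ, p, ε) ≤ (ℓ · ⌈log(1/ε)·p^{-binom(ℓ,2)}⌉)^ℓ ≤ (1/p)^{ℓ³}·(ℓ·(1+log(1/ε)))^ℓ. -/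
open MeasureTheory ENNReal

/-- `N` witnesses the robust sunflower threshold: every `ℓ`-uniform family of size at
least `N` (over any finite universe) contains a `(q, ε)`-robust sunflower. -/
def RBat (ℓ : ℕ) (q ε : ℝ) (N : ℕ) : Prop :=
  ∀ (U : Type) (_ : Fintype U) (_ : DecidableEq U) (𝒮 : Finset (Finset U)),
    (∀ S ∈ 𝒮, S.card = ℓ) → N ≤ 𝒮.card →
    ∃ 𝒯 ⊆ 𝒮, 𝒯.Nonempty ∧ IsRobustSunflower 𝒯 q ε

/-- `RB ℓ q ε`: the smallest `N` such that every `ℓ`-uniform family of size at least `N`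
contains a `(q, ε)`-robust sunflower (`⊤` if there is no such `N`). -/
noncomputable def RB (ℓ : ℕ) (q ε : ℝ) : ℕ∞ :=
  sInf {N : ℕ∞ | ∃ m : ℕ, N = m ∧ RBat ℓ q ε m}

/-- `N` witnesses the robust clique sunflower threshold: every `ℓ`-uniform family of
vertex sets of size at least `N` contains a `(p, ε)`-robust clique sunflower. -/
def RCBat (ℓ : ℕ) (p ε : ℝ) (N : ℕ) : Prop :=
  ∀ (n : ℕ) (𝒮 : Finset (Finset (Fin n))),
    (∀ S ∈ 𝒮, S.card = ℓ) → N ≤ 𝒮.card →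
    ∃ 𝒯 ⊆ 𝒮, 𝒯.Nonempty ∧ IsRobustCliqueSunflower 𝒯 p ε

/-- `RCB ℓ p ε`: the smallest `N` such that every `ℓ`-uniform family of size at least `N`
contains a `(p, ε)`-robust clique sunflower (`⊤` if there is no such `N`). -/
noncomputable def RCB (ℓ : ℕ) (p ε : ℝ) : ℕ∞ :=
  sInf {N : ℕ∞ | ∃ m : ℕ, N = m ∧ RCBat ℓ p ε m}

/-- `𝒯` is a sunflower: all pairwise intersections of distinct members equal the core. -/
def IsSunflower {U : Type*} [Fintype U] [DecidableEq U] (𝒯 : Finset (Finset U)) : Prop :=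
  ∀ S₁ ∈ 𝒯, ∀ S₂ ∈ 𝒯, S₁ ≠ S₂ → S₁ ∩ S₂ = core 𝒯

/-- `N` witnesses the sunflower threshold: every `ℓ`-uniform family of size at least `N`
contains a `k`-sunflower. -/
def SFat (ℓ k N : ℕ) : Prop :=
  ∀ (U : Type) (_ : Fintype U) (_ : DecidableEq U) (𝒮 : Finset (Finset U)),
    (∀ S ∈ 𝒮, S.card = ℓ) → N ≤ 𝒮.card →
    ∃ 𝒯 ⊆ 𝒮, 𝒯.card = k ∧ IsSunflower 𝒯

/-- `SF ℓ k`: the smallest `N` such that every `ℓ`-uniform family of size at least `N`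
contains a `k`-sunflower (`⊤` if there is no such `N`). -/
noncomputable def SF (ℓ k : ℕ) : ℕ∞ :=
  sInf {N : ℕ∞ | ∃ m : ℕ, N = m ∧ SFat ℓ k m}

/-!
In a `k`-sunflower with core `C`, the petals `K_S \ K_C` are pairwise disjoint edge sets of
size at most `binom(ℓ,2)`. Under `G(n,p)` the events "petal `S` is not contained in `G`" depend on
disjoint sets of coordinates of a product measure, hence are independent, so all of them occur
with probability at most `(1 - p^binom(ℓ,2))^k ≤ exp(-k p^binom(ℓ,2)) ≤ ε`. Thus every
`ℓ`-uniform `k`-sunflower is a `(p, ε)`-robust clique sunflower and `RCB(ℓ,p,ε) ≤ S(ℓ,k)`.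
The numerical bound follows from `k ≤ (1 + log(1/ε)) p^(-binom(ℓ,2))` and `binom(ℓ,2)·ℓ ≤ ℓ³`.
-/
open ProbabilityTheory

lemma DependsOn.preimage_image_restrict {ι : Type*} {Ω : ι → Type*} {E : Set (Π i, Ω i)}
    {A : Finset ι} (hE : DependsOn (· ∈ E) (A : Set ι)) :
    (fun ω (i : A) => ω i) ⁻¹' ((fun ω (i : A) => ω i) '' E) = E := by
  ext ω
  exact ⟨fun ⟨η, hη, hηω⟩ => (hE fun i hi => congrFun hηω ⟨i, hi⟩).mp hη, fun h => ⟨ω, h, rfl⟩⟩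

section Independence

variable {ι : Type*} [Fintype ι] {Ω : ι → Type*} [∀ i, MeasurableSpace (Ω i)]
  [∀ i, Countable (Ω i)] [∀ i, MeasurableSingletonClass (Ω i)]
  (μ : (i : ι) → Measure (Ω i)) [∀ i, IsProbabilityMeasure (μ i)]

lemma measure_pi_inter_eq_mul_of_dependsOn {A B : Finset ι} (hAB : Disjoint A B)
    {E F : Set (Π i, Ω i)} (hE : DependsOn (· ∈ E) (A : Set ι))
    (hF : DependsOn (· ∈ F) (B : Set ι)) :
    Measure.pi μ (E ∩ F) = Measure.pi μ E * Measure.pi μ F := by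
  have hindep : IndepFun (fun ω (i : A) => ω i) (fun ω (i : B) => ω i) (Measure.pi μ) :=
    (iIndepFun_pi (X := fun _ => id) fun _ => aemeasurable_id).indepFun_finset A B hAB
      fun i => measurable_pi_apply i
  rw [← hE.preimage_image_restrict, ← hF.preimage_image_restrict]
  exact hindep.measure_inter_preimage_eq_mul _ _ (Set.to_countable _).measurableSet
    (Set.to_countable _).measurableSet

lemma measure_pi_biInter_eq_prod_of_dependsOn {κ : Type*} (𝒯 : Finset κ) {A : κ → Finset ι}
    (hA : (𝒯 : Set κ).PairwiseDisjoint A) {E : κ → Set (Π i, Ω i)}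
    (hE : ∀ i ∈ 𝒯, DependsOn (· ∈ E i) (A i : Set ι)) :
    Measure.pi μ (⋂ i ∈ 𝒯, E i) = ∏ i ∈ 𝒯, Measure.pi μ (E i) := by
  classical
  induction 𝒯 using Finset.induction_on with
  | empty => simp
  | @insert a 𝒯 ha ih =>
    have hrest : DependsOn (· ∈ ⋂ i ∈ 𝒯, E i) (𝒯.biUnion A : Set ι) := by
      intro ω η hωη
      simp only [Set.mem_iInter, eq_iff_iff]
      refine forall₂_congr fun i hi => (hE i (Finset.mem_insert_of_mem hi) fun x hx => ?_).to_iff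
      exact hωη x (Finset.mem_coe.2 (Finset.mem_biUnion.2 ⟨i, hi, hx⟩))
    have hdisj : Disjoint (A a) (𝒯.biUnion A) :=
      (Finset.disjoint_biUnion_right _ _ _).2 fun i hi =>
        hA (Finset.mem_insert_self a 𝒯) (Finset.mem_insert_of_mem hi) fun h => ha (h ▸ hi)
    rw [Finset.set_biInter_insert, Finset.prod_insert ha,
      measure_pi_inter_eq_mul_of_dependsOn μ hdisj (hE a (Finset.mem_insert_self a 𝒯)) hrest,
      ih (hA.subset (by simp)) fun i hi => hE i (Finset.mem_insert_of_mem hi)]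

end Independence

section RandomSubset

variable {U : Type*} [Fintype U] [DecidableEq U] {p : ℝ}

lemma bernoulliMeasure_singleton (hp : p ∈ unitInterval) (b : Bool) :
    Ber(true, false, ⟨p, hp⟩) {b} = if b then ENNReal.ofReal p else ENNReal.ofReal (1 - p) := by
  cases b <;>
    simp [ENNReal.ofReal_eq_coe_nnreal hp.1, ENNReal.ofReal_eq_coe_nnreal (sub_nonneg.2 hp.2)] <;>
    rfl

lemma randFun_eq_pi (hp : p ∈ unitInterval) :
    randFun U p = Measure.pi fun _ : U => Ber(true, false, ⟨p, hp⟩) := by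
  refine Measure.ext_of_singleton fun f => ?_
  simp [randFun, Measure.finsetSum_apply, Measure.pi_singleton, bernoulliMeasure_singleton,
    Pi.single_apply]

lemma isProbabilityMeasure_randFun_s13 (hp : p ∈ unitInterval) :
    IsProbabilityMeasure (randFun U p) := by
  rw [randFun_eq_pi hp]
  infer_instance

lemma randFun_forall_true (hp : p ∈ unitInterval) (T : Finset U) :
    randFun U p {W | ∀ x ∈ T, W x = true} = ENNReal.ofReal p ^ T.card := by
  have hbox : {W : U → Bool | ∀ x ∈ T, W x = true}
      = Set.univ.pi fun x => if x ∈ T then {true} else Set.univ := by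
    ext W
    simp only [Set.mem_ofPred_eq, Set.mem_pi, Set.mem_univ, true_implies]
    refine forall_congr' fun x => ?_
    split_ifs <;> simp [*]
  rw [randFun_eq_pi hp, hbox, Measure.pi_pi]
  simp only [apply_ite, bernoulliMeasure_singleton, measure_univ, if_true]
  rw [Finset.prod_ite_mem, Finset.univ_inter, Finset.prod_const]

lemma randFun_exists_false (hp : p ∈ unitInterval) (T : Finset U) :
    randFun U p {W | ∃ x ∈ T, W x = false} = 1 - ENNReal.ofReal p ^ T.card := by
  have := isProbabilityMeasure_randFun_s13 (U := U) hp
  have hcompl : {W : U → Bool | ∃ x ∈ T, W x = false} = {W | ∀ x ∈ T, W x = true}ᶜ := by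
    ext W; simp
  rw [hcompl, prob_compl_eq_one_sub (Set.toFinite _).measurableSet, randFun_forall_true hp]

lemma randFun_forall_exists_false (hp : p ∈ unitInterval) {κ : Type*} (𝒯 : Finset κ)
    {A : κ → Finset U} (hA : (𝒯 : Set κ).PairwiseDisjoint A) :
    randFun U p {W | ∀ i ∈ 𝒯, ∃ x ∈ A i, W x = false}
      = ∏ i ∈ 𝒯, (1 - ENNReal.ofReal p ^ (A i).card) := by
  have hinter : {W : U → Bool | ∀ i ∈ 𝒯, ∃ x ∈ A i, W x = false}
      = ⋂ i ∈ 𝒯, {W | ∃ x ∈ A i, W x = false} := by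
    ext W; simp
  rw [hinter, randFun_eq_pi hp, measure_pi_biInter_eq_prod_of_dependsOn _ 𝒯 hA]
  · simp_rw [← randFun_eq_pi hp, randFun_exists_false hp]
  · intro i _ W W' hWW'
    simp only [Set.mem_ofPred_eq, eq_iff_iff]
    exact exists_congr fun x => and_congr_right fun hx => by rw [hWW' x hx]

lemma randFun_forall_exists_false_le (hp : p ∈ unitInterval) {κ : Type*} (𝒯 : Finset κ)
    {A : κ → Finset U} (hA : (𝒯 : Set κ).PairwiseDisjoint A) {m : ℕ}
    (hm : ∀ i ∈ 𝒯, (A i).card ≤ m) {ε : ℝ} (hε : Real.exp (-(𝒯.card * p ^ m)) ≤ ε) :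
    randFun U p {W | ∀ i ∈ 𝒯, ∃ x ∈ A i, W x = false} ≤ ENNReal.ofReal ε := by
  have hpm : p ^ m ≤ 1 := pow_le_one₀ hp.1 hp.2
  have hfactor : ∀ i ∈ 𝒯, 1 - ENNReal.ofReal p ^ (A i).card ≤ ENNReal.ofReal (1 - p ^ m) :=
    fun i hi => by
      rw [ENNReal.ofReal_sub _ (pow_nonneg hp.1 m), ENNReal.ofReal_one, ← ENNReal.ofReal_pow hp.1]
      exact tsub_le_tsub_left
        (ENNReal.ofReal_le_ofReal (pow_le_pow_of_le_one hp.1 hp.2 (hm i hi))) 1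
  have hreal : (1 - p ^ m) ^ 𝒯.card ≤ ε :=
    calc (1 - p ^ m) ^ 𝒯.card ≤ Real.exp (-p ^ m) ^ 𝒯.card :=
          pow_le_pow_left₀ (sub_nonneg.2 hpm) (Real.one_sub_le_exp_neg _) _
      _ = Real.exp (-(𝒯.card * p ^ m)) := by rw [← Real.exp_nat_mul, mul_neg]
      _ ≤ ε := hε
  calc randFun U p {W | ∀ i ∈ 𝒯, ∃ x ∈ A i, W x = false}
      = ∏ i ∈ 𝒯, (1 - ENNReal.ofReal p ^ (A i).card) := randFun_forall_exists_false hp 𝒯 hA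
    _ ≤ ∏ _i ∈ 𝒯, ENNReal.ofReal (1 - p ^ m) := Finset.prod_le_prod' hfactor
    _ = ENNReal.ofReal ((1 - p ^ m) ^ 𝒯.card) := by
        rw [Finset.prod_const, ENNReal.ofReal_pow (sub_nonneg.2 hpm)]
    _ ≤ ENNReal.ofReal ε := ENNReal.ofReal_le_ofReal hreal

lemma ofReal_one_sub_le_randFun_exists_forall_true (hp : p ∈ unitInterval) {κ : Type*}
    (𝒯 : Finset κ) {A : κ → Finset U} (hA : (𝒯 : Set κ).PairwiseDisjoint A) {m : ℕ}
    (hm : ∀ i ∈ 𝒯, (A i).card ≤ m) {ε : ℝ} (hε : Real.exp (-(𝒯.card * p ^ m)) ≤ ε) :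
    ENNReal.ofReal (1 - ε) ≤ randFun U p {W | ∃ i ∈ 𝒯, ∀ x ∈ A i, W x = true} := by
  have := isProbabilityMeasure_randFun_s13 (U := U) hp
  have hgood : {W : U → Bool | ∃ i ∈ 𝒯, ∀ x ∈ A i, W x = true}
      = {W | ∀ i ∈ 𝒯, ∃ x ∈ A i, W x = false}ᶜ := by
    ext W; simp
  rw [hgood, prob_compl_eq_one_sub (Set.toFinite _).measurableSet,
    ENNReal.ofReal_sub _ ((Real.exp_pos _).le.trans hε), ENNReal.ofReal_one]
  exact tsub_le_tsub_left (randFun_forall_exists_false_le hp 𝒯 hA hm hε) 1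

end RandomSubset

section Clique

variable {n : ℕ}

lemma cliqueEdges_eq_image_offDiag (S : Finset (Fin n)) :
    cliqueEdges S = S.offDiag.image (Function.uncurry Sym2.mk) := by
  have hoffDiag : (S ×ˢ S).filter (fun q => q.1 ≠ q.2) = S.offDiag := by
    ext q; simp [and_assoc]
  rw [cliqueEdges, hoffDiag]
  rfl

lemma card_cliqueEdges (S : Finset (Fin n)) : (cliqueEdges S).card = S.card.choose 2 := by
  rw [cliqueEdges_eq_image_offDiag, Sym2.card_image_offDiag]

lemma mk_mem_cliqueEdges_s13 {S : Finset (Fin n)} {a b : Fin n} :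
    s(a, b) ∈ cliqueEdges S ↔ a ∈ S ∧ b ∈ S ∧ a ≠ b := by
  simp only [cliqueEdges_eq_image_offDiag, Finset.mem_image, Finset.mem_offDiag, Prod.exists,
    Function.uncurry_apply_pair, Sym2.eq_iff]
  constructor
  · rintro ⟨x, y, ⟨hx, hy, hxy⟩, ⟨rfl, rfl⟩ | ⟨rfl, rfl⟩⟩
    exacts [⟨hx, hy, hxy⟩, ⟨hy, hx, Ne.symm hxy⟩]
  · exact fun h => ⟨a, b, h, Or.inl ⟨rfl, rfl⟩⟩

lemma IsSunflower.pairwiseDisjoint_cliqueEdges_sdiff {𝒯 : Finset (Finset (Fin n))}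
    (h𝒯 : IsSunflower 𝒯) :
    (𝒯 : Set (Finset (Fin n))).PairwiseDisjoint fun S => cliqueEdges S \ cliqueEdges (core 𝒯) := by
  intro S₁ h₁ S₂ h₂ hne
  rw [Function.onFun, Finset.disjoint_left]
  intro e
  induction e using Sym2.ind with
  | _ a b =>
    simp only [Finset.mem_sdiff, mk_mem_cliqueEdges_s13, ← h𝒯 S₁ h₁ S₂ h₂ hne, Finset.mem_inter]
    tauto

lemma IsSunflower.isRobustCliqueSunflower {𝒯 : Finset (Finset (Fin n))} (h𝒯 : IsSunflower 𝒯)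
    {ℓ : ℕ} (hunif : ∀ S ∈ 𝒯, S.card = ℓ) {p ε : ℝ} (hp : p ∈ unitInterval)
    (hε : Real.exp (-(𝒯.card * p ^ ℓ.choose 2)) ≤ ε) :
    IsRobustCliqueSunflower 𝒯 p ε := by
  refine (ofReal_one_sub_le_randFun_exists_forall_true hp 𝒯
    h𝒯.pairwiseDisjoint_cliqueEdges_sdiff (fun S hS => ?_) hε).trans (measure_mono ?_)
  · rw [← hunif S hS, ← card_cliqueEdges]
    exact Finset.card_le_card Finset.sdiff_subset
  · rintro G ⟨S, hS, hG⟩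
    exact ⟨S, hS, fun e he => or_iff_not_imp_left.2 fun hC => hG e (Finset.mem_sdiff.2 ⟨he, hC⟩)⟩

end Clique

lemma RCBat_of_SFat {ℓ k N : ℕ} (hk : 0 < k) {p ε : ℝ} (hp : p ∈ unitInterval)
    (hε : Real.exp (-(k * p ^ ℓ.choose 2)) ≤ ε) (h : SFat ℓ k N) : RCBat ℓ p ε N := by
  intro n 𝒮 hunif hcard
  obtain ⟨𝒯, hsub, hcard𝒯, h𝒯⟩ := h (Fin n) _ _ 𝒮 hunif hcard
  refine ⟨𝒯, hsub, Finset.card_pos.1 (hcard𝒯 ▸ hk), ?_⟩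
  exact h𝒯.isRobustCliqueSunflower (fun S hS => hunif S (hsub hS)) hp (hcard𝒯 ▸ hε)

lemma RCB_le_SF {ℓ k : ℕ} (hk : 0 < k) {p ε : ℝ} (hp : p ∈ unitInterval)
    (hε : Real.exp (-(k * p ^ ℓ.choose 2)) ≤ ε) : RCB ℓ p ε ≤ SF ℓ k :=
  le_sInf fun _ ⟨m, hN, hm⟩ => sInf_le ⟨m, hN, RCBat_of_SFat hk hp hε hm⟩

lemma exp_neg_natCeil_mul_le {ε q : ℝ} (hε : 0 < ε) (hq : 0 < q) :
    Real.exp (-(⌈Real.log (1 / ε) * q⁻¹⌉₊ * q)) ≤ ε :=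
  calc Real.exp (-(⌈Real.log (1 / ε) * q⁻¹⌉₊ * q))
      ≤ Real.exp (-(Real.log (1 / ε) * q⁻¹ * q)) := by
        gcongr
        exact Nat.le_ceil _
    _ = ε := by rw [inv_mul_cancel_right₀ hq.ne', one_div, Real.log_inv, neg_neg, Real.exp_log hε]

lemma natCeil_mul_inv_le {L q : ℝ} (hL : 0 ≤ L) (hq0 : 0 < q) (hq1 : q ≤ 1) :
    (⌈L * q⁻¹⌉₊ : ℝ) ≤ (1 + L) * q⁻¹ := by
  have : 1 ≤ q⁻¹ := (one_le_inv₀ hq0).2 hq1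
  have := Nat.ceil_lt_add_one (mul_nonneg hL (inv_nonneg.2 hq0.le))
  linarith

lemma choose_two_mul_le_pow_three (ℓ : ℕ) : ℓ.choose 2 * ℓ ≤ ℓ ^ 3 :=
  calc ℓ.choose 2 * ℓ ≤ ℓ ^ 2 * ℓ := Nat.mul_le_mul_right _ (Nat.choose_le_pow ℓ 2)
    _ = ℓ ^ 3 := by ring

lemma pow_mul_natCeil_le {ℓ : ℕ} {p L : ℝ} (hp0 : 0 < p) (hp1 : p ≤ 1) (hL : 0 ≤ L) :
    ((ℓ : ℝ) * ⌈L * (p ^ ℓ.choose 2)⁻¹⌉₊) ^ ℓ ≤ (1 / p) ^ (ℓ ^ 3) * ((ℓ : ℝ) * (1 + L)) ^ ℓ :=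
  calc ((ℓ : ℝ) * ⌈L * (p ^ ℓ.choose 2)⁻¹⌉₊) ^ ℓ
      ≤ ((ℓ : ℝ) * ((1 + L) * (p ^ ℓ.choose 2)⁻¹)) ^ ℓ := by
        gcongr
        exact natCeil_mul_inv_le hL (pow_pos hp0 _) (pow_le_one₀ hp0.le hp1)
    _ = (1 / p) ^ (ℓ.choose 2 * ℓ) * ((ℓ : ℝ) * (1 + L)) ^ ℓ := by
        rw [one_div, pow_mul, ← mul_pow, inv_pow]
        ring
    _ ≤ (1 / p) ^ (ℓ ^ 3) * ((ℓ : ℝ) * (1 + L)) ^ ℓ := by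
        gcongr
        · exact (one_le_div hp0).2 hp1
        · exact choose_two_mul_le_pow_three ℓ

/-- Using the sunflower bound `S(ℓ,k) ≤ (ℓk)^ℓ` (and the fact that every `ℓ`-uniform
`k`-sunflower is a `(p, exp(-k·p^{binom(ℓ,2)}))`-robust clique sunflower), one obtains
`RCB(ℓ, p, ε) ≤ (ℓ·⌈log(1/ε)·p^{-binom(ℓ,2)}⌉)^ℓ ≤ (1/p)^{ℓ³}·(ℓ·(1 + log(1/ε)))^ℓ`. -/
theorem stmt13 (hSF : ∀ ℓ k : ℕ, 1 ≤ ℓ → 1 ≤ k →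
      (SF ℓ k : ℝ≥0∞) ≤ ENNReal.ofReal (((ℓ : ℝ) * k) ^ ℓ)) :
    ∀ (ℓ : ℕ) (p ε : ℝ), 1 ≤ ℓ → 0 < p → p < 1 → 0 < ε → ε < 1 →
      (RCB ℓ p ε : ℝ≥0∞) ≤
          ENNReal.ofReal (((ℓ : ℝ) * ⌈Real.log (1 / ε) * (p ^ ℓ.choose 2)⁻¹⌉₊) ^ ℓ)
      ∧ ((ℓ : ℝ) * ⌈Real.log (1 / ε) * (p ^ ℓ.choose 2)⁻¹⌉₊) ^ ℓ ≤
          (1 / p) ^ (ℓ ^ 3) * ((ℓ : ℝ) * (1 + Real.log (1 / ε))) ^ ℓ := by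
  intro ℓ p ε hℓ hp0 hp1 hε0 hε1
  have hq : 0 < p ^ ℓ.choose 2 := pow_pos hp0 _
  have hL : 0 < Real.log (1 / ε) := Real.log_pos (one_lt_one_div hε0 hε1)
  have hk : 0 < ⌈Real.log (1 / ε) * (p ^ ℓ.choose 2)⁻¹⌉₊ :=
    Nat.ceil_pos.2 (mul_pos hL (inv_pos.2 hq))
  refine ⟨?_, pow_mul_natCeil_le hp0 hp1.le hL.le⟩
  calc (RCB ℓ p ε : ℝ≥0∞) ≤ SF ℓ ⌈Real.log (1 / ε) * (p ^ ℓ.choose 2)⁻¹⌉₊ :=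
        ENat.toENNReal_le.2 (RCB_le_SF hk ⟨hp0.le, hp1.le⟩ (exp_neg_natCeil_mul_le hε0 hq))
    _ ≤ _ := hSF ℓ _ hℓ hk
end
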